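/- Let γ ∈ ℝ and define the Gaussian densities ρ_1(x) := (1/√(2π)) e^{−x²/2} and ρ_2(x) := (1/√(2π)) e^{−(x−γ)²/2} on ℝ, and set ρ := (ρ_1 + ρ_2)/2. Define the coupling parameters C_k := (1/4) ∫_ℝ (ρ_k'(x)/ρ_k(x) − ρ'(x)/ρ(x))² ρ_k(x) dx for k = 1, 2, and the overlapping parameter S := ∫_ℝ ρ_1(x) ρ_2(x)/ρ(x) dx. Then C_1 + C_2 = (γ²/8)·S; in particular C := max(C_1, C_2) ≤ (γ²/8)·S. -/

import Mathlib

/-! Write `s₁, s₂, s` for the log-derivatives of `ρ₁, ρ₂` and of the mixture `ρ = (ρ₁ + ρ₂)/2`.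
Since `s = (ρ₁ s₁ + ρ₂ s₂)/(ρ₁ + ρ₂)`, one has `s₁ - s = (s₁ - s₂) ρ₂/(ρ₁ + ρ₂)` and
`s₂ - s = (s₂ - s₁) ρ₁/(ρ₁ + ρ₂)`, so the two coupling integrands add up to
`(s₁ - s₂)² ρ₁ρ₂/(2ρ)`. The weights lie in `[0, 1]`, so a bounded score difference makes both
integrands integrable. For two unit-variance Gaussians `s₁ - s₂ = -γ` is constant. -/

open MeasureTheory ProbabilityTheory Real

noncomputable section

def couplingParameter (ρₖ ρ : ℝ → ℝ) : ℝ :=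
  (1 / 4) * ∫ x, (logDeriv ρₖ x - logDeriv ρ x) ^ 2 * ρₖ x

def mixture (ρ₁ ρ₂ : ℝ → ℝ) : ℝ → ℝ := fun x => (ρ₁ x + ρ₂ x) / 2

lemma couplingParameter_nonneg {ρₖ : ℝ → ℝ} (ρ : ℝ → ℝ) (hρₖ : ∀ x, 0 ≤ ρₖ x) :
    0 ≤ couplingParameter ρₖ ρ :=
  mul_nonneg (by norm_num) (integral_nonneg fun x => mul_nonneg (sq_nonneg _) (hρₖ x))

lemma measurable_logDeriv {f : ℝ → ℝ} (hf : Measurable f) : Measurable (logDeriv f) :=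
  (measurable_deriv f).div hf

section Mixture

variable {ρ₁ ρ₂ : ℝ → ℝ}

lemma mixture_comm : mixture ρ₁ ρ₂ = mixture ρ₂ ρ₁ := by
  ext x
  simp only [mixture, add_comm]

lemma logDeriv_sub_logDeriv_mixture {x : ℝ} (h₁ : ρ₁ x ≠ 0) (h₂ : ρ₂ x ≠ 0)
    (hsum : ρ₁ x + ρ₂ x ≠ 0) (hd₁ : DifferentiableAt ℝ ρ₁ x) (hd₂ : DifferentiableAt ℝ ρ₂ x) :
    logDeriv ρ₁ x - logDeriv (mixture ρ₁ ρ₂) x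
      = (logDeriv ρ₁ x - logDeriv ρ₂ x) * (ρ₂ x / (ρ₁ x + ρ₂ x)) := by
  have hderiv : deriv (mixture ρ₁ ρ₂) x = (deriv ρ₁ x + deriv ρ₂ x) / 2 :=
    ((hd₁.hasDerivAt.add hd₂.hasDerivAt).div_const 2).deriv
  simp only [logDeriv_apply, hderiv, mixture]
  field_simp
  ring

lemma abs_logDeriv_sub_logDeriv_mixture_le {x : ℝ} (h₁ : 0 < ρ₁ x) (h₂ : 0 < ρ₂ x)
    (hd₁ : DifferentiableAt ℝ ρ₁ x) (hd₂ : DifferentiableAt ℝ ρ₂ x) :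
    |logDeriv ρ₁ x - logDeriv (mixture ρ₁ ρ₂) x| ≤ |logDeriv ρ₁ x - logDeriv ρ₂ x| := by
  have hsum : 0 < ρ₁ x + ρ₂ x := add_pos h₁ h₂
  have hweight : |ρ₂ x / (ρ₁ x + ρ₂ x)| ≤ 1 := by
    rw [abs_of_pos (div_pos h₂ hsum), div_le_one hsum]
    linarith
  rw [logDeriv_sub_logDeriv_mixture h₁.ne' h₂.ne' hsum.ne' hd₁ hd₂, abs_mul]
  exact mul_le_of_le_one_right (abs_nonneg _) hweight

lemma integrable_sq_logDeriv_sub_logDeriv_mixture_mul {M : ℝ} (h₁ : ∀ x, 0 < ρ₁ x)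
    (h₂ : ∀ x, 0 < ρ₂ x) (hd₁ : Differentiable ℝ ρ₁) (hd₂ : Differentiable ℝ ρ₂)
    (hi₁ : Integrable ρ₁) (hM : ∀ x, |logDeriv ρ₁ x - logDeriv ρ₂ x| ≤ M) :
    Integrable (fun x => (logDeriv ρ₁ x - logDeriv (mixture ρ₁ ρ₂) x) ^ 2 * ρ₁ x) := by
  have hmeas : Measurable (mixture ρ₁ ρ₂) :=
    ((hd₁.continuous.add hd₂.continuous).div_const 2).measurable
  refine hi₁.bdd_mul (c := M ^ 2) ?_ (Filter.Eventually.of_forall fun x => ?_)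
  · exact ((measurable_logDeriv hd₁.continuous.measurable).sub
      (measurable_logDeriv hmeas)).pow_const 2 |>.aestronglyMeasurable
  · rw [Real.norm_eq_abs, abs_pow]
    exact pow_le_pow_left₀ (abs_nonneg _)
      ((abs_logDeriv_sub_logDeriv_mixture_le (h₁ x) (h₂ x) (hd₁ x) (hd₂ x)).trans (hM x)) 2

theorem couplingParameter_add_couplingParameter_mixture {M : ℝ} (h₁ : ∀ x, 0 < ρ₁ x)
    (h₂ : ∀ x, 0 < ρ₂ x) (hd₁ : Differentiable ℝ ρ₁) (hd₂ : Differentiable ℝ ρ₂)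
    (hi₁ : Integrable ρ₁) (hi₂ : Integrable ρ₂) (hM : ∀ x, |logDeriv ρ₁ x - logDeriv ρ₂ x| ≤ M) :
    couplingParameter ρ₁ (mixture ρ₁ ρ₂) + couplingParameter ρ₂ (mixture ρ₁ ρ₂)
      = 1 / 8 * ∫ x, (logDeriv ρ₁ x - logDeriv ρ₂ x) ^ 2 * (ρ₁ x * ρ₂ x / mixture ρ₁ ρ₂ x) := by
  have hM' : ∀ x, |logDeriv ρ₂ x - logDeriv ρ₁ x| ≤ M := fun x => by rw [abs_sub_comm]; exact hM x
  have hint₁ := integrable_sq_logDeriv_sub_logDeriv_mixture_mul h₁ h₂ hd₁ hd₂ hi₁ hM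
  have hint₂ := integrable_sq_logDeriv_sub_logDeriv_mixture_mul h₂ h₁ hd₂ hd₁ hi₂ hM'
  rw [← mixture_comm] at hint₂
  have hpointwise : ∀ x,
      (logDeriv ρ₁ x - logDeriv (mixture ρ₁ ρ₂) x) ^ 2 * ρ₁ x
        + (logDeriv ρ₂ x - logDeriv (mixture ρ₁ ρ₂) x) ^ 2 * ρ₂ x
      = 1 / 2 * ((logDeriv ρ₁ x - logDeriv ρ₂ x) ^ 2 * (ρ₁ x * ρ₂ x / mixture ρ₁ ρ₂ x)) := by
    intro x
    have hsum : ρ₁ x + ρ₂ x ≠ 0 := (add_pos (h₁ x) (h₂ x)).ne'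
    have e₂ := logDeriv_sub_logDeriv_mixture (h₂ x).ne' (h₁ x).ne' (by rwa [add_comm])
      (hd₂ x) (hd₁ x)
    rw [← mixture_comm, add_comm (ρ₂ x)] at e₂
    rw [logDeriv_sub_logDeriv_mixture (h₁ x).ne' (h₂ x).ne' hsum (hd₁ x) (hd₂ x), e₂, mixture]
    field_simp
    ring
  rw [couplingParameter, couplingParameter, ← mul_add, ← integral_add hint₁ hint₂,
    integral_congr_ae (Filter.Eventually.of_forall hpointwise), integral_const_mul]
  ring

end Mixture

section Gaussian

open scoped NNReal

lemma hasDerivAt_gaussianPDFReal (μ : ℝ) (v : ℝ≥0) (x : ℝ) :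
    HasDerivAt (gaussianPDFReal μ v) (-(x - μ) / v * gaussianPDFReal μ v x) x := by
  have hexponent : HasDerivAt (fun y => -(y - μ) ^ 2 / (2 * v)) (-(x - μ) / v) x := by
    have := ((((hasDerivAt_id' x).sub_const μ).fun_pow 2).fun_neg).div_const (2 * (v : ℝ))
    refine this.congr_deriv ?_
    field_simp
    ring
  refine (hexponent.exp.const_mul (√(2 * π * v))⁻¹).congr_deriv ?_
  rw [gaussianPDFReal]
  ring

lemma logDeriv_gaussianPDFReal (μ : ℝ) {v : ℝ≥0} (hv : v ≠ 0) (x : ℝ) :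
    logDeriv (gaussianPDFReal μ v) x = -(x - μ) / v := by
  rw [logDeriv_apply, (hasDerivAt_gaussianPDFReal μ v x).deriv,
    mul_div_cancel_right₀ _ (gaussianPDFReal_pos μ v x hv).ne']

lemma gaussianPDFReal_one (μ : ℝ) :
    gaussianPDFReal μ 1 = fun x => (√(2 * π))⁻¹ * exp (-((x - μ) ^ 2) / 2) := by
  simp [gaussianPDFReal_def]

end Gaussian

/-- mixture of two Gaussians: for the mixture `ρ = (ρ₁ + ρ₂)/2` of a
standard Gaussian and its shift by `γ`, the coupling parameters satisfy
`C₁ + C₂ = (γ²/8)·S`, and in particular `C = max(C₁, C₂) ≤ (γ²/8)·S`. -/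
theorem statement14 (γ : ℝ)
    (ρ₁ ρ₂ ρ : ℝ → ℝ)
    (h₁ : ρ₁ = fun x => (Real.sqrt (2 * π))⁻¹ * Real.exp (-(x ^ 2) / 2))
    (h₂ : ρ₂ = fun x => (Real.sqrt (2 * π))⁻¹ * Real.exp (-((x - γ) ^ 2) / 2))
    (hρ : ρ = fun x => (ρ₁ x + ρ₂ x) / 2)
    (C₁ C₂ S : ℝ)
    (hC₁ : C₁ = (1 / 4) * ∫ x : ℝ, (deriv ρ₁ x / ρ₁ x - deriv ρ x / ρ x) ^ 2 * ρ₁ x)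
    (hC₂ : C₂ = (1 / 4) * ∫ x : ℝ, (deriv ρ₂ x / ρ₂ x - deriv ρ x / ρ x) ^ 2 * ρ₂ x)
    (hS : S = ∫ x : ℝ, ρ₁ x * ρ₂ x / ρ x) :
    C₁ + C₂ = γ ^ 2 / 8 * S ∧ max C₁ C₂ ≤ γ ^ 2 / 8 * S := by
  have e₁ : ρ₁ = gaussianPDFReal 0 1 := by simp [h₁, gaussianPDFReal_one]
  have e₂ : ρ₂ = gaussianPDFReal γ 1 := by rw [h₂, gaussianPDFReal_one]
  have hC₁' : C₁ = couplingParameter ρ₁ (mixture ρ₁ ρ₂) := by rw [hC₁, hρ]; rfl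
  have hC₂' : C₂ = couplingParameter ρ₂ (mixture ρ₁ ρ₂) := by rw [hC₂, hρ]; rfl
  subst e₁ e₂
  have hscore : ∀ x, logDeriv (gaussianPDFReal 0 1) x - logDeriv (gaussianPDFReal γ 1) x = -γ := by
    intro x
    simp only [logDeriv_gaussianPDFReal _ one_ne_zero, NNReal.coe_one, div_one]
    ring
  have hpos := fun μ x => gaussianPDFReal_pos μ 1 x one_ne_zero
  have hdiff : ∀ μ, Differentiable ℝ (gaussianPDFReal μ 1) :=
    fun μ x => (hasDerivAt_gaussianPDFReal μ 1 x).differentiableAt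
  have hsum : C₁ + C₂ = γ ^ 2 / 8 * S := by
    rw [hC₁', hC₂', couplingParameter_add_couplingParameter_mixture (hpos 0) (hpos γ) (hdiff 0)
      (hdiff γ) (integrable_gaussianPDFReal 0 1) (integrable_gaussianPDFReal γ 1)
      (M := |γ|) fun x => by rw [hscore, abs_neg], hS, hρ]
    simp only [hscore, neg_sq, integral_const_mul, mixture]
    ring
  refine ⟨hsum, hsum ▸ max_le_add_of_nonneg ?_ ?_⟩
  · exact hC₁' ▸ couplingParameter_nonneg _ fun x => (hpos 0 x).le
  · exact hC₂' ▸ couplingParameter_nonneg _ fun x => (hpos γ x).le
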